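/- Let M be a left R-module such that M^(ℵ₀) (the countable direct sum of copies of M) is injective. Then M is Σ-injective, i.e., every direct sum of copies of M is injective. -/

import Mathlib

open DirectSum

/-- A module `M` is finitely injective if every finite subset of `M` is contained in an
injective submodule of `M`. -/
def FinitelyInjective (R : Type*) [Ring R] (M : Type*) [AddCommGroup M] [Module R M] : Prop :=
  ∀ s : Finset M, ∃ N : Submodule R M, Module.Injective R N ∧ ∀ x ∈ s, x ∈ N

/-- An injective module `M` is `Σ`-injective if every direct sum of copies of `M`
is injective. -/
def SigmaInjective (R : Type u) [Ring R] (M : Type v) [AddCommGroup M] [Module R M] : Prop :=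
  ∀ ι : Type v, Module.Injective R (⨁ _ : ι, M)

/-- A module is a direct sum of injective modules if it is the internal direct sum of a
family of injective submodules. -/
def IsDirectSumOfInjectives (R : Type u) [Ring R] (M : Type v) [AddCommGroup M]
    [Module R M] : Prop :=
  ∃ (ι : Type v) (_ : DecidableEq ι) (p : ι → Submodule R M),
    (∀ i, Module.Injective R (p i)) ∧ DirectSum.IsInternal p

/-!
Let `g : D → M^(ι)` be defined on a submodule `D` of a cyclic module `R y`. The supports of the
values of `g` all lie in one finite set: otherwise an injective sequence of indices met by them
compresses `g` to a map into `M^(ℕ)`, whose extension to `R y` has all its values supported in the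
finite support of the image of `y`, a contradiction. So `g` factors through `M^S` for a finite
`S`, a retract of `M^(ℕ)` and hence injective, and `g` extends to `R y`. Extending from submodules
of cyclic modules is enough for injectivity, by the Zorn argument behind Baer's criterion.
-/

universe u v

open Submodule in
/-- Baer's criterion tests ideals of `R`, which live in `Type u`; injectivity against modules in
`Type v` only provides extensions from submodules of cyclic modules in `Type v`, and these
suffice for the Zorn argument. -/
def Module.CyclicBaer (R : Type u) [Ring R] (Q : Type v) [AddCommGroup Q] [Module R Q] : Prop :=
  ∀ ⦃N : Type v⦄ [AddCommGroup N] [Module R N] (y : N) (D : Submodule R N)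
    (hD : D ≤ span R {y}) (g : D →ₗ[R] Q), ∃ φ : span R {y} →ₗ[R] Q, φ ∘ₗ inclusion hD = g

namespace Module.CyclicBaer

open Submodule Module.Baer

variable {R : Type u} [Ring R] {Q : Type v} [AddCommGroup Q] [Module R Q]
  {X Y : Type v} [AddCommGroup X] [AddCommGroup Y] [Module R X] [Module R Y]

theorem extensionOfMax_domain_eq_top (hQ : CyclicBaer R Q) (i : X →ₗ[R] Y) (f : X →ₗ[R] Q)
    [Fact (Function.Injective i)] : (extensionOfMax i f).domain = ⊤ := by
  set E := extensionOfMax i f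
  refine eq_top_iff'.mpr fun y => ?_
  obtain ⟨φ, hφ⟩ := hQ y _ inf_le_left (E.toLinearPMap.domRestrict (span R {y})).toFun
  let Φ : Y →ₗ.[R] Q := ⟨span R {y}, φ⟩
  have compat : ∀ (x : E.domain) (z : Φ.domain), (x : Y) = z → E.toLinearPMap x = Φ z := by
    intro x z hxz
    have hz : (z : Y) ∈ span R {y} ⊓ E.domain := ⟨z.2, hxz ▸ x.2⟩
    calc E.toLinearPMap x = E.toLinearPMap.domRestrict (span R {y}) ⟨z, hz⟩ :=
          (LinearPMap.domRestrict_apply hxz.symm).symm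
      _ = φ z := (LinearMap.congr_fun hφ ⟨z, hz⟩).symm
  have hle := E.toLinearPMap.left_le_sup Φ compat
  let E' : ExtensionOf i f :=
    { E.toLinearPMap.sup Φ compat with
      le := E.le.trans le_sup_left
      is_extension := fun m => (E.is_extension m).trans (hle.2 rfl) }
  have hmax : E' = E := extensionOfMax_is_max i f E' hle
  exact hmax ▸ mem_sup_right (mem_span_singleton_self y)

protected theorem injective (hQ : CyclicBaer R Q) : Module.Injective R Q where
  out X Y _ _ _ _ i hi f := by
    have : Fact (Function.Injective i) := ⟨hi⟩
    have htop := hQ.extensionOfMax_domain_eq_top i f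
    refine ⟨(extensionOfMax i f).toLinearPMap.toFun ∘ₗ
      LinearMap.codRestrict _ LinearMap.id fun y => htop ▸ mem_top, fun x => ?_⟩
    exact ((extensionOfMax i f).is_extension x).symm

end Module.CyclicBaer

noncomputable def DFinsupp.lcomapDomain (R : Type*) [Semiring R] {ι κ : Type*}
    {β : ι → Type*} [∀ i, AddCommMonoid (β i)] [∀ i, Module R (β i)]
    (h : κ → ι) (hh : Function.Injective h) : (Π₀ i, β i) →ₗ[R] Π₀ k, β (h k) where
  toFun := DFinsupp.comapDomain h hh
  map_add' := DFinsupp.comapDomain_add h hh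
  map_smul' := DFinsupp.comapDomain_smul h hh

theorem Module.Injective.of_comp_eq_id {R : Type u} [Ring R] {P Q : Type v} [AddCommGroup P]
    [AddCommGroup Q] [Module R P] [Module R Q] [Module.Injective R Q]
    (s : P →ₗ[R] Q) (r : Q →ₗ[R] P) (hrs : r ∘ₗ s = LinearMap.id) : Module.Injective R P where
  out X Y _ _ _ _ i hi f := by
    obtain ⟨φ, hφ⟩ := Module.Injective.out i hi (s ∘ₗ f)
    refine ⟨r ∘ₗ φ, fun x => ?_⟩
    simp only [LinearMap.comp_apply, hφ, ← LinearMap.comp_apply r s, hrs, LinearMap.id_apply]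

section Faith

open Submodule

variable {R : Type u} [Ring R] {M : Type v} [AddCommGroup M] [Module R M]

theorem injective_directSum_of_countable (h : Module.Injective R (⨁ _ : ℕ, M))
    (κ : Type v) [Countable κ] : Module.Injective R (⨁ _ : κ, M) := by
  classical
  obtain ⟨e, he⟩ := exists_injective_nat κ
  refine .of_comp_eq_id (toModule R κ _ fun k => lof R ℕ (fun _ => M) (e k))
    (DFinsupp.lcomapDomain R e he) (linearMap_ext R fun k => LinearMap.ext fun m => ?_)
  rw [LinearMap.comp_apply, LinearMap.comp_apply, toModule_lof]
  exact DFinsupp.comapDomain_single (β := fun _ => M) e he k m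

theorem injective_pi_of_finite (h : Module.Injective R (⨁ _ : ℕ, M))
    (κ : Type v) [Finite κ] : Module.Injective R (κ → M) := by
  have := Fintype.ofFinite κ
  have := injective_directSum_of_countable h κ
  let e := linearEquivFunOnFintype R κ fun _ => M
  exact .of_comp_eq_id e.symm.toLinearMap e.toLinearMap (by ext; simp)

theorem finite_setOf_exists_apply_ne_zero_of_le_span_singleton
    (h : Module.Injective R (⨁ _ : ℕ, M)) {ι : Type*} {N : Type v} [AddCommGroup N]
    [Module R N] {y : N} {D : Submodule R N}
    (hD : D ≤ span R {y}) (g : D →ₗ[R] ⨁ _ : ι, M) : {i | ∃ x, g x i ≠ 0}.Finite := by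
  classical
  by_contra hinf
  let a := Set.Infinite.natEmbedding _ hinf
  choose b hb using fun n => (a n).2
  have ha : Function.Injective fun n => (a n : ι) := Subtype.val_injective.comp a.injective
  obtain ⟨H, hH⟩ := Module.Injective.out (inclusion hD) (inclusion_injective hD)
    (DFinsupp.lcomapDomain R _ ha ∘ₗ g : D →ₗ[R] ⨁ _ : ℕ, M)
  let y₀ : span R {y} := ⟨y, mem_span_singleton_self y⟩
  obtain ⟨k, hk⟩ := Infinite.exists_notMem_finset (H y₀).support
  obtain ⟨r, hr⟩ := mem_span_singleton.mp (hD (b k).2)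
  have hincl : inclusion hD (b k) = r • y₀ := Subtype.ext hr.symm
  apply hb k
  calc g (b k) (a k) = H (inclusion hD (b k)) k := (congrArg (· k) (hH (b k))).symm
    _ = 0 := by rw [hincl, map_smul, DirectSum.smul_apply, DFinsupp.notMem_support_iff.mp hk,
      smul_zero]

theorem exists_extension_of_finite_support (h : Module.Injective R (⨁ _ : ℕ, M)) {ι : Type v}
    {X Y : Type v} [AddCommGroup X] [AddCommGroup Y] [Module R X] [Module R Y]
    (i : X →ₗ[R] Y) (hi : Function.Injective i) (g : X →ₗ[R] ⨁ _ : ι, M)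
    (hg : {a | ∃ x, g x a ≠ 0}.Finite) : ∃ φ : Y →ₗ[R] ⨁ _ : ι, M, φ ∘ₗ i = g := by
  classical
  set S := hg.toFinset
  have := injective_pi_of_finite h (S : Set ι)
  let restrict : (⨁ _ : ι, M) →ₗ[R] (↥(S : Set ι) → M) :=
    LinearMap.pi fun s => component R ι (fun _ => M) s
  obtain ⟨ψ, hψ⟩ := Module.Injective.out i hi (restrict ∘ₗ g)
  refine ⟨lmk R ι (fun _ => M) S ∘ₗ ψ, LinearMap.ext fun x => DFinsupp.ext fun a => ?_⟩
  rw [LinearMap.comp_apply, LinearMap.comp_apply, lmk, DFinsupp.lmk_apply, DFinsupp.mk_apply]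
  by_cases ha : a ∈ S
  · rw [dif_pos ha, hψ]
    rfl
  · rw [dif_neg ha]
    by_contra hne
    exact ha (hg.mem_toFinset.mpr ⟨x, Ne.symm hne⟩)

end Faith

theorem sigmaInjective_of_countable_directSum_injective (R : Type u) [Ring R]
    (M : Type v) [AddCommGroup M] [Module R M]
    (h : Module.Injective R (⨁ _ : ℕ, M)) : SigmaInjective R M := by
  intro ι
  refine Module.CyclicBaer.injective fun N _ _ y D hD g => ?_
  exact exists_extension_of_finite_support h (Submodule.inclusion hD)
    (Submodule.inclusion_injective hD) g
    (finite_setOf_exists_apply_ne_zero_of_le_span_singleton h hD g)
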